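/- arXiv:2005.10799 — 3 statements merged into one kernel-verified Lean document; each statement's English description precedes it below -/
import Mathlib

section
/- Let A₀ be a symmetric positive definite n×n real matrix. Then there exists a constant c > 0 such that for all ξ ∈ W^{1,2}(ℝ, ℝⁿ), one has ‖ξ‖_{W^{1,2}} ≤ c ‖∂ₛξ + A₀ξ‖_{L²}. -/
/-!
Write `η = ξ' + A ξ` and `⟨·,·⟩` for the Euclidean dot product. Pointwise
`⟨η, η⟩ = ⟨ξ', ξ'⟩ + 2 ⟨ξ', A ξ⟩ + ⟨A ξ, A ξ⟩`, and for symmetric `A` the cross term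
`2 ⟨ξ', A ξ⟩` is the a.e. derivative of the absolutely continuous function `⟨ξ, A ξ⟩`.
That function is integrable on `ℝ` and has limits at `±∞`, so these limits vanish and the
cross term integrates to zero: `‖η‖² = ‖ξ'‖² + ‖A ξ‖²` in `L²`. Invertibility of `A` gives
`|ξ| ≤ C |A ξ|` pointwise, hence the estimate; the remaining constants only compare the
sup norm of `ℝⁿ = Fin n → ℝ` with the Euclidean one.
-/

open MeasureTheory Set Filter intervalIntegral Topology Matrix

section Primitive

variable {u u' : ℝ → ℝ}

theorem MeasureTheory.LocallyIntegrable.intervalIntegrable {E : Type*} [NormedAddCommGroup E]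
    {f : ℝ → E} (hf : LocallyIntegrable f) (a b : ℝ) : IntervalIntegrable f volume a b :=
  (intervalIntegrable_iff').2 (hf.integrableOn_isCompact isCompact_uIcc)

theorem eq_add_integral_of_eq_add_integral_zero (hu' : LocallyIntegrable u')
    (hu : ∀ t, u t = u 0 + ∫ s in (0:ℝ)..t, u' s) (a t : ℝ) :
    u t = u a + ∫ s in a..t, u' s := by
  rw [← integral_interval_sub_left (hu'.intervalIntegrable 0 t) (hu'.intervalIntegrable 0 a),
    hu t, hu a]
  ring

theorem absolutelyContinuousOnInterval_of_eq_add_integral (hu' : LocallyIntegrable u')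
    (hu : ∀ t, u t = u 0 + ∫ s in (0:ℝ)..t, u' s) (a b : ℝ) :
    AbsolutelyContinuousOnInterval u a b := by
  have h := ((LipschitzWith.const (u a)).lipschitzOnWith.absolutelyContinuousOnInterval).add
    ((hu'.intervalIntegrable a b).absolutelyContinuousOnInterval_intervalIntegral left_mem_uIcc)
  rwa [funext (eq_add_integral_of_eq_add_integral_zero hu' hu a)]

theorem ae_hasDerivAt_of_eq_add_integral (hu' : LocallyIntegrable u')
    (hu : ∀ t, u t = u 0 + ∫ s in (0:ℝ)..t, u' s) : ∀ᵐ t, HasDerivAt u (u' t) t := by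
  filter_upwards [LocallyIntegrable.ae_hasDerivAt_integral hu'] with t ht
  rw [funext hu]
  exact (ht 0).const_add _

end Primitive

section Improper

variable {E : Type*} [NormedAddCommGroup E] [NormedSpace ℝ E] {F g : ℝ → E}

theorem tendsto_atTop_zero_of_intervalIntegral_eq_sub (hF : Integrable F) (hg : Integrable g)
    (hFg : ∀ a b, ∫ t in a..b, g t = F b - F a) : Tendsto F atTop (𝓝 0) := by
  have hlim : Tendsto F atTop (𝓝 (F 0 + ∫ t in Ioi 0, g t)) :=
    ((intervalIntegral_tendsto_integral_Ioi 0 hg.integrableOn tendsto_id).const_add (F 0)).congr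
      fun b => by simp [hFg]
  convert hlim
  refine ((hF.integrableAtFilter atTop).eq_zero_of_tendsto (fun s hs => ?_) hlim).symm
  obtain ⟨b, hb⟩ := mem_atTop_sets.1 hs
  exact top_le_iff.1 (Real.volume_Ici (a := b) ▸ measure_mono hb)

theorem tendsto_atBot_zero_of_intervalIntegral_eq_sub (hF : Integrable F) (hg : Integrable g)
    (hFg : ∀ a b, ∫ t in a..b, g t = F b - F a) : Tendsto F atBot (𝓝 0) := by
  have hlim : Tendsto F atBot (𝓝 (F 0 - ∫ t in Iic 0, g t)) :=
    ((intervalIntegral_tendsto_integral_Iic 0 hg.integrableOn tendsto_id).const_sub (F 0)).congr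
      fun a => by simp [hFg]
  convert hlim
  refine ((hF.integrableAtFilter atBot).eq_zero_of_tendsto (fun s hs => ?_) hlim).symm
  obtain ⟨a, ha⟩ := mem_atBot_sets.1 hs
  exact top_le_iff.1 (Real.volume_Iic (a := a) ▸ measure_mono ha)

theorem integral_eq_zero_of_intervalIntegral_eq_sub [CompleteSpace E] (hF : Integrable F)
    (hg : Integrable g) (hFg : ∀ a b, ∫ t in a..b, g t = F b - F a) : ∫ t, g t = 0 := by
  have hlim := intervalIntegral_tendsto_integral hg tendsto_neg_atTop_atBot tendsto_id
  simp only [hFg, id] at hlim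
  refine tendsto_nhds_unique hlim ?_
  simpa using (tendsto_atTop_zero_of_intervalIntegral_eq_sub hF hg hFg).sub
    ((tendsto_atBot_zero_of_intervalIntegral_eq_sub hF hg hFg).comp tendsto_neg_atTop_atBot)

end Improper

section Product

variable {u u' v v' : ℝ → ℝ}

theorem integral_deriv_mul_add_mul_deriv_of_eq_add_integral (hu' : LocallyIntegrable u')
    (hv' : LocallyIntegrable v') (hu : ∀ t, u t = u 0 + ∫ s in (0:ℝ)..t, u' s)
    (hv : ∀ t, v t = v 0 + ∫ s in (0:ℝ)..t, v' s) (a b : ℝ) :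
    ∫ t in a..b, u' t * v t + u t * v' t = u b * v b - u a * v a := by
  rw [← (absolutelyContinuousOnInterval_of_eq_add_integral hu' hu a b).integral_deriv_mul_eq_sub
    (absolutelyContinuousOnInterval_of_eq_add_integral hv' hv a b)]
  refine integral_congr_ae ?_
  filter_upwards [ae_hasDerivAt_of_eq_add_integral hu' hu,
    ae_hasDerivAt_of_eq_add_integral hv' hv] with t hut hvt _
  rw [hut.deriv, hvt.deriv]

theorem integral_deriv_mul_add_mul_deriv_eq_zero (hu : MemLp u 2 volume)
    (hu' : MemLp u' 2 volume) (hv : MemLp v 2 volume) (hv' : MemLp v' 2 volume)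
    (hu_eq : ∀ t, u t = u 0 + ∫ s in (0:ℝ)..t, u' s)
    (hv_eq : ∀ t, v t = v 0 + ∫ s in (0:ℝ)..t, v' s) :
    ∫ t, u' t * v t + u t * v' t = 0 :=
  integral_eq_zero_of_intervalIntegral_eq_sub (hu.integrable_mul hv)
    ((hu'.integrable_mul hv).add (hu.integrable_mul hv'))
    (integral_deriv_mul_add_mul_deriv_of_eq_add_integral (hu'.locallyIntegrable one_le_two)
      (hv'.locallyIntegrable one_le_two) hu_eq hv_eq)

end Product

section Matrix

variable {α ι κ : Type*} [Fintype ι] [Fintype κ] [MeasurableSpace α] {μ : Measure α}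

theorem MeasureTheory.MemLp.mulVec {p : ENNReal} {f : α → κ → ℝ} (A : Matrix ι κ ℝ)
    (hf : MemLp f p μ) : MemLp (fun x => A *ᵥ f x) p μ :=
  A.mulVecLin.toContinuousLinearMap.comp_memLp' hf

theorem MeasureTheory.MemLp.integrable_dotProduct {f g : α → ι → ℝ} (hf : MemLp f 2 μ)
    (hg : MemLp g 2 μ) : Integrable (fun x => f x ⬝ᵥ g x) μ :=
  integrable_finsetSum _ fun i _ => (hf.eval i).integrable_mul (hg.eval i)

theorem sq_norm_le_dotProduct_self (y : ι → ℝ) : ‖y‖ ^ 2 ≤ y ⬝ᵥ y := by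
  have hsum : 0 ≤ y ⬝ᵥ y := Finset.sum_nonneg fun i _ => mul_self_nonneg (y i)
  refine (Real.le_sqrt (norm_nonneg _) hsum).1
    ((pi_norm_le_iff_of_nonneg (Real.sqrt_nonneg _)).2 fun i => ?_)
  rw [Real.norm_eq_abs, ← Real.sqrt_mul_self_eq_abs]
  exact Real.sqrt_le_sqrt
    (Finset.single_le_sum (fun j _ => mul_self_nonneg (y j)) (Finset.mem_univ i))

theorem dotProduct_self_le_card_mul_sq_norm (y : ι → ℝ) : y ⬝ᵥ y ≤ Fintype.card ι * ‖y‖ ^ 2 := by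
  rw [← nsmul_eq_mul]
  refine Finset.sum_le_card_nsmul _ _ _ fun i _ => ?_
  rw [← sq, ← sq_abs, ← Real.norm_eq_abs]
  exact pow_le_pow_left₀ (norm_nonneg _) (norm_le_pi_norm y i) 2

theorem Matrix.IsSymm.dotProduct_mulVec_comm {A : Matrix ι ι ℝ} (hA : A.IsSymm) (x y : ι → ℝ) :
    x ⬝ᵥ A *ᵥ y = y ⬝ᵥ A *ᵥ x := by
  rw [dotProduct_mulVec, ← mulVec_transpose, hA.eq, dotProduct_comm]

theorem Matrix.exists_norm_le_mul_norm_mulVec [DecidableEq ι] {A : Matrix ι ι ℝ}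
    (hA : IsUnit A) : ∃ C, ∀ y : ι → ℝ, ‖y‖ ≤ C * ‖A *ᵥ y‖ := by
  let _ := Matrix.linftyOpNormedAddCommGroup (m := ι) (n := ι) (α := ℝ)
  refine ⟨‖A⁻¹‖, fun y => ?_⟩
  calc ‖y‖ = ‖A⁻¹ *ᵥ A *ᵥ y‖ := by
        rw [mulVec_mulVec, nonsing_inv_mul _ ((isUnit_iff_isUnit_det A).1 hA), one_mulVec]
    _ ≤ ‖A⁻¹‖ * ‖A *ᵥ y‖ := linfty_opNorm_mulVec _ _

theorem eval_eq_add_integral {ξ ξ' : ℝ → ι → ℝ} (hξ' : LocallyIntegrable ξ')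
    (hξ : ∀ t, ξ t = ξ 0 + ∫ s in (0:ℝ)..t, ξ' s) (i : ι) (t : ℝ) :
    ξ t i = ξ 0 i + ∫ s in (0:ℝ)..t, ξ' s i := by
  rw [hξ t, Pi.add_apply]
  exact congrArg _ ((ContinuousLinearMap.proj (R := ℝ) (φ := fun _ : ι => ℝ) i)
    |>.intervalIntegral_comp_comm (hξ'.intervalIntegrable 0 t)).symm

theorem integral_dotProduct_mulVec_eq_zero {A : Matrix ι ι ℝ} (hA : A.IsSymm)
    {ξ ξ' : ℝ → ι → ℝ} (hξ : MemLp ξ 2 volume) (hξ' : MemLp ξ' 2 volume)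
    (hξ_eq : ∀ t, ξ t = ξ 0 + ∫ s in (0:ℝ)..t, ξ' s) :
    ∫ t, ξ' t ⬝ᵥ A *ᵥ ξ t = 0 := by
  have hcomp := eval_eq_add_integral (hξ'.locallyIntegrable one_le_two) hξ_eq
  have hsymm : ∀ t, ξ' t ⬝ᵥ A *ᵥ ξ t
      = 2⁻¹ * ∑ i, ∑ j, A i j * (ξ' t i * ξ t j + ξ t i * ξ' t j) := by
    intro t
    have hexpand : ξ' t ⬝ᵥ A *ᵥ ξ t + ξ t ⬝ᵥ A *ᵥ ξ' t
        = ∑ i, ∑ j, A i j * (ξ' t i * ξ t j + ξ t i * ξ' t j) := by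
      simp only [dotProduct, mulVec, Finset.mul_sum, ← Finset.sum_add_distrib]
      exact Finset.sum_congr rfl fun i _ => Finset.sum_congr rfl fun j _ => by ring
    linarith [hA.dotProduct_mulVec_comm (ξ t) (ξ' t)]
  have hint : ∀ i j, Integrable (fun t => ξ' t i * ξ t j + ξ t i * ξ' t j) :=
    fun i j => ((hξ'.eval i).integrable_mul (hξ.eval j)).add
      ((hξ.eval i).integrable_mul (hξ'.eval j))
  have hzero : ∀ i j, ∫ t, A i j * (ξ' t i * ξ t j + ξ t i * ξ' t j) = 0 := fun i j => by
    rw [MeasureTheory.integral_const_mul, integral_deriv_mul_add_mul_deriv_eq_zero (hξ.eval i)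
      (hξ'.eval i) (hξ.eval j) (hξ'.eval j) (hcomp i) (hcomp j), mul_zero]
  simp_rw [hsymm]
  rw [MeasureTheory.integral_const_mul,
    integral_finsetSum (f := fun i t => ∑ j, A i j * (ξ' t i * ξ t j + ξ t i * ξ' t j)) _
      fun i _ => integrable_finsetSum _ fun j _ => (hint i j).const_mul _]
  refine mul_eq_zero_of_right _ (Finset.sum_eq_zero fun i _ => ?_)
  rw [integral_finsetSum (f := fun j t => A i j * (ξ' t i * ξ t j + ξ t i * ξ' t j)) _
    fun j _ => (hint i j).const_mul _]
  exact Finset.sum_eq_zero fun j _ => hzero i j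

theorem integral_dotProduct_self_add_mulVec {A : Matrix ι ι ℝ} (hA : A.IsSymm)
    {ξ ξ' : ℝ → ι → ℝ} (hξ : MemLp ξ 2 volume) (hξ' : MemLp ξ' 2 volume)
    (hξ_eq : ∀ t, ξ t = ξ 0 + ∫ s in (0:ℝ)..t, ξ' s) :
    ∫ t, (ξ' t + A *ᵥ ξ t) ⬝ᵥ (ξ' t + A *ᵥ ξ t)
      = (∫ t, ξ' t ⬝ᵥ ξ' t) + ∫ t, (A *ᵥ ξ t) ⬝ᵥ (A *ᵥ ξ t) := by
  have hAξ := hξ.mulVec A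
  have hexpand : ∀ x y : ι → ℝ, (x + y) ⬝ᵥ (x + y) = (x ⬝ᵥ x + y ⬝ᵥ y) + 2 * (x ⬝ᵥ y) := by
    intro x y
    rw [add_dotProduct, dotProduct_add, dotProduct_add, dotProduct_comm y x]
    ring
  simp_rw [hexpand]
  rw [integral_add ((hξ'.integrable_dotProduct hξ').fun_add (hAξ.integrable_dotProduct hAξ))
      ((hξ'.integrable_dotProduct hAξ).const_mul 2),
    integral_add (hξ'.integrable_dotProduct hξ') (hAξ.integrable_dotProduct hAξ),
    MeasureTheory.integral_const_mul, integral_dotProduct_mulVec_eq_zero hA hξ hξ' hξ_eq,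
    mul_zero, add_zero]

theorem integral_sq_norm_add_integral_sq_norm_deriv_le {A : Matrix ι ι ℝ} {C : ℝ}
    (hA : A.IsSymm) (hC : ∀ y : ι → ℝ, ‖y‖ ≤ C * ‖A *ᵥ y‖)
    {ξ ξ' : ℝ → ι → ℝ} (hξ : MemLp ξ 2 volume) (hξ' : MemLp ξ' 2 volume)
    (hξ_eq : ∀ t, ξ t = ξ 0 + ∫ s in (0:ℝ)..t, ξ' s) :
    (∫ t, ‖ξ t‖ ^ 2) + ∫ t, ‖ξ' t‖ ^ 2
      ≤ (C ^ 2 + 1) * Fintype.card ι * ∫ t, ‖ξ' t + A *ᵥ ξ t‖ ^ 2 := by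
  have hAξ := hξ.mulVec A
  have hη := hξ'.add hAξ
  have hξ_le : (∫ t, ‖ξ t‖ ^ 2) ≤ C ^ 2 * ∫ t, (A *ᵥ ξ t) ⬝ᵥ (A *ᵥ ξ t) := by
    rw [← MeasureTheory.integral_const_mul]
    refine integral_mono hξ.norm.integrable_sq ((hAξ.integrable_dotProduct hAξ).const_mul _)
      fun t => ?_
    calc ‖ξ t‖ ^ 2 ≤ (C * ‖A *ᵥ ξ t‖) ^ 2 :=
          pow_le_pow_left₀ (norm_nonneg _) (hC _) 2
      _ ≤ C ^ 2 * (A *ᵥ ξ t) ⬝ᵥ (A *ᵥ ξ t) := by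
          rw [mul_pow]
          exact mul_le_mul_of_nonneg_left (sq_norm_le_dotProduct_self _) (sq_nonneg _)
  have hξ'_le : (∫ t, ‖ξ' t‖ ^ 2) ≤ ∫ t, ξ' t ⬝ᵥ ξ' t :=
    integral_mono hξ'.norm.integrable_sq (hξ'.integrable_dotProduct hξ')
      fun t => sq_norm_le_dotProduct_self _
  have hη_le : (∫ t, (ξ' t + A *ᵥ ξ t) ⬝ᵥ (ξ' t + A *ᵥ ξ t))
      ≤ Fintype.card ι * ∫ t, ‖ξ' t + A *ᵥ ξ t‖ ^ 2 := by
    rw [← MeasureTheory.integral_const_mul]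
    exact integral_mono (hη.integrable_dotProduct hη) (hη.norm.integrable_sq.const_mul _)
      fun t => dotProduct_self_le_card_mul_sq_norm _
  rw [integral_dotProduct_self_add_mulVec hA hξ hξ' hξ_eq] at hη_le
  have hP : 0 ≤ ∫ t, (A *ᵥ ξ t) ⬝ᵥ (A *ᵥ ξ t) :=
    integral_nonneg fun t => (sq_nonneg _).trans (sq_norm_le_dotProduct_self _)
  have hQ : 0 ≤ ∫ t, ξ' t ⬝ᵥ ξ' t :=
    integral_nonneg fun t => (sq_nonneg _).trans (sq_norm_le_dotProduct_self _)
  calc (∫ t, ‖ξ t‖ ^ 2) + ∫ t, ‖ξ' t‖ ^ 2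
      ≤ (C ^ 2 + 1) * ((∫ t, ξ' t ⬝ᵥ ξ' t) + ∫ t, (A *ᵥ ξ t) ⬝ᵥ (A *ᵥ ξ t)) := by
        nlinarith [sq_nonneg C]
    _ ≤ (C ^ 2 + 1) * Fintype.card ι * ∫ t, ‖ξ' t + A *ᵥ ξ t‖ ^ 2 := by
        rw [mul_assoc]
        exact mul_le_mul_of_nonneg_left hη_le (by positivity)

end Matrix

/-- For a symmetric positive definite matrix `A₀`, the operator
`D_{A₀} ξ = ∂ₛ ξ + A₀ ξ` satisfies `‖ξ‖_{W^{1,2}} ≤ c ‖D_{A₀} ξ‖_{L²}` for all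
`ξ ∈ W^{1,2}(ℝ, ℝⁿ)` (represented by its continuous representative together with
its weak derivative `ξ'`). -/
theorem estimate_posdef_constant_coefficient
    (n : ℕ) (A₀ : Matrix (Fin n) (Fin n) ℝ) (hpos : A₀.PosDef) :
    ∃ c : ℝ, 0 < c ∧ ∀ ξ ξ' : ℝ → Fin n → ℝ,
      MemLp ξ 2 (volume : Measure ℝ) → MemLp ξ' 2 (volume : Measure ℝ) →
      (∀ t : ℝ, ξ t = ξ 0 + ∫ s in (0:ℝ)..t, ξ' s) →
      Real.sqrt ((∫ s : ℝ, ‖ξ s‖ ^ 2) + ∫ s : ℝ, ‖ξ' s‖ ^ 2) ≤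
        c * Real.sqrt (∫ s : ℝ, ‖ξ' s + A₀.mulVec (ξ s)‖ ^ 2) := by
  obtain ⟨C, hC⟩ := exists_norm_le_mul_norm_mulVec hpos.isUnit
  have hK : 0 < (C ^ 2 + 1) * n + 1 := by positivity
  refine ⟨√((C ^ 2 + 1) * n + 1), Real.sqrt_pos.2 hK, fun ξ ξ' hξ hξ' hξ_eq => ?_⟩
  have h := integral_sq_norm_add_integral_sq_norm_deriv_le
    (isHermitian_iff_isSymm.1 hpos.isHermitian) hC hξ hξ' hξ_eq
  rw [Fintype.card_fin] at h
  rw [← Real.sqrt_mul hK.le]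
  exact Real.sqrt_le_sqrt (h.trans (mul_le_mul_of_nonneg_right (by linarith)
    (integral_nonneg fun _ => sq_nonneg _)))
end

section
/- Let A : ℝ → End(ℝⁿ) be a continuous family of diagonal matrices A(s) = diag(a₁(s),…,a_n(s)) with aᵢ(s) = aᵢ^± constant nonzero for ±s ≥ 1. Then the kernel of the operator D_A : W^{1,2}(ℝ,ℝⁿ) → L²(ℝ,ℝⁿ), ξ ↦ ∂ₛξ + Aξ, has dimension max{μ(A⁻) - μ(A⁺), 0}, where μ(A^±) is the number of negative entries among the aᵢ^± (with eigenvalues ordered increasingly). -/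
open MeasureTheory

/-- The kernel of the operator `D_A ξ = ∂ₛ ξ + A ξ` on `W^{1,2}(ℝ, ℝⁿ)`, for a
diagonal family `A(s) = diag(a₁(s), …, a_n(s))`. -/
def kerDiag (n : ℕ) (a : ℝ → Fin n → ℝ) : Submodule ℝ (ℝ → Fin n → ℝ) where
  carrier := {ξ | MemLp ξ 2 (volume : Measure ℝ) ∧
    ∀ s : ℝ, HasDerivAt ξ (fun i => -(a s i * ξ s i)) s}
  zero_mem' := by
    refine ⟨MemLp.zero, fun s => ?_⟩
    have h : HasDerivAt (fun _ : ℝ => (0 : Fin n → ℝ)) 0 s := hasDerivAt_const s 0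
    convert h using 1
    all_goals try rfl
    funext i
    simp
  add_mem' := by
    rintro ξ η ⟨hξm, hξd⟩ ⟨hηm, hηd⟩
    refine ⟨hξm.add hηm, fun s => ?_⟩
    have h := (hξd s).add (hηd s)
    convert h using 1
    all_goals try rfl
    funext i
    simp [Pi.add_apply]
    ring
  smul_mem' := by
    rintro c ξ ⟨hm, hd⟩
    refine ⟨hm.const_smul c, fun s => ?_⟩
    have h := (hd s).const_smul c
    convert h using 1
    all_goals try rfl
    funext i
    simp [Pi.smul_apply, smul_eq_mul]
    ring

/-!
A solution of `ξ' = -A ξ` decouples: its `i`-th component is `ξᵢ(0) · exp (-∫₀ˢ aᵢ)`, which for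
`±s ≥ 1` is a constant multiple of `exp (-aᵢ^± s)`. Such a component is square integrable iff it
vanishes or `aᵢ⁺ > 0 > aᵢ⁻`, so evaluation at `0` identifies the kernel with the functions on the
set of these indices. As the `aᵢ^±` are increasing, `{i | aᵢ⁻ < 0}` and `{i | aᵢ⁺ < 0}` are initial
segments of `Fin n`, hence nested, and the number of indices in the first but not the second is
the truncated difference of their sizes.
-/

open Set intervalIntegral Finset

lemma integrableOn_Ioi_exp_mul_iff {c r : ℝ} :
    IntegrableOn (fun x => Real.exp (c * x)) (Ioi r) ↔ c < 0 := by
  refine ⟨fun h => ?_, fun hc => by simpa using exp_neg_integrableOn_Ioi r (neg_pos.2 hc)⟩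
  by_contra! hc
  have hbound : IntegrableOn (fun _ => Real.exp (c * r)) (Ioi r) := by
    refine h.mono' aestronglyMeasurable_const ((ae_restrict_iff' measurableSet_Ioi).2 ?_)
    refine Filter.Eventually.of_forall fun x hx => ?_
    rw [Real.norm_of_nonneg (Real.exp_pos _).le]
    exact Real.exp_le_exp.2 (mul_le_mul_of_nonneg_left (le_of_lt hx) hc)
  simp [Real.volume_Ioi] at hbound

lemma integrableOn_Iic_exp_mul_iff {c r : ℝ} :
    IntegrableOn (fun x => Real.exp (c * x)) (Iic r) ↔ 0 < c := by
  have hreflect : IntegrableOn (fun x => Real.exp (c * x)) (Iic r) ↔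
      IntegrableOn (fun x => Real.exp (-c * x)) (Ici (-r)) :=
    ⟨fun h => by
      rw [← neg_neg r] at h
      simpa only [neg_mul, mul_neg] using h.comp_neg_Ici,
      fun h => by simpa only [neg_mul, mul_neg, neg_neg] using h.comp_neg_Iic⟩
  rw [hreflect, integrableOn_Ici_iff_integrableOn_Ioi, integrableOn_Ioi_exp_mul_iff, neg_lt_zero]

noncomputable def fundamentalSolution (b : ℝ → ℝ) (s : ℝ) : ℝ :=
  Real.exp (-∫ t in (0 : ℝ)..s, b t)

section Scalar

variable {b : ℝ → ℝ}

@[simp]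
lemma fundamentalSolution_zero (b : ℝ → ℝ) : fundamentalSolution b 0 = 1 := by
  simp [fundamentalSolution]

lemma fundamentalSolution_pos (b : ℝ → ℝ) (s : ℝ) : 0 < fundamentalSolution b s :=
  Real.exp_pos _

lemma hasDerivAt_fundamentalSolution (hb : Continuous b) (s : ℝ) :
    HasDerivAt (fundamentalSolution b) (-(b s * fundamentalSolution b s)) s := by
  refine ((hb.integral_hasStrictDerivAt 0 s).hasDerivAt.neg).exp.congr_deriv ?_
  rw [fundamentalSolution, Pi.neg_apply]
  ring

lemma continuous_fundamentalSolution (hb : Continuous b) : Continuous (fundamentalSolution b) :=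
  continuous_iff_continuousAt.2 fun s => (hasDerivAt_fundamentalSolution hb s).continuousAt

lemma eq_mul_fundamentalSolution (hb : Continuous b) {y : ℝ → ℝ}
    (hy : ∀ s, HasDerivAt y (-(b s * y s)) s) (s : ℝ) :
    y s = y 0 * fundamentalSolution b s := by
  have hquot : ∀ t, HasDerivAt (y / fundamentalSolution b) 0 t := fun t =>
    ((hy t).div (hasDerivAt_fundamentalSolution hb t) (fundamentalSolution_pos b t).ne').congr_deriv
      (by ring)
  have := is_const_of_deriv_eq_zero (fun t => (hquot t).differentiableAt)
    (fun t => (hquot t).deriv) s 0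
  rwa [Pi.div_apply, Pi.div_apply, fundamentalSolution_zero, div_one,
    div_eq_iff (fundamentalSolution_pos b s).ne'] at this

lemma fundamentalSolution_eq_of_forall_eq (hb : Continuous b) {p r s : ℝ}
    (h : ∀ t ∈ uIcc r s, b t = p) :
    fundamentalSolution b s = fundamentalSolution b r * Real.exp (-(p * (s - r))) := by
  have hsplit : ∫ t in (0 : ℝ)..s, b t = (∫ t in (0 : ℝ)..r, b t) + ∫ t in r..s, b t :=
    (integral_add_adjacent_intervals (hb.intervalIntegrable _ _) (hb.intervalIntegrable _ _)).symm
  rw [fundamentalSolution, fundamentalSolution, hsplit, integral_congr h,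
    intervalIntegral.integral_const, smul_eq_mul, ← Real.exp_add]
  ring_nf

lemma fundamentalSolution_sq_eq_of_forall_eq (hb : Continuous b) {p r s : ℝ}
    (h : ∀ t ∈ uIcc r s, b t = p) :
    fundamentalSolution b s ^ 2 =
      (fundamentalSolution b r ^ 2 * Real.exp (2 * p * r)) * Real.exp (-(2 * p) * s) := by
  rw [fundamentalSolution_eq_of_forall_eq hb h, mul_pow, ← Real.exp_nat_mul, mul_assoc,
    ← Real.exp_add]
  ring_nf

lemma integrableOn_Ioi_fundamentalSolution_sq_iff (hb : Continuous b) {p r : ℝ}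
    (h : ∀ t, r ≤ t → b t = p) :
    IntegrableOn (fun s => fundamentalSolution b s ^ 2) (Ioi r) ↔ 0 < p := by
  have heq : EqOn (fun s => fundamentalSolution b s ^ 2)
      (fun s => (fundamentalSolution b r ^ 2 * Real.exp (2 * p * r)) * Real.exp (-(2 * p) * s))
      (Ioi r) := fun s hs =>
    fundamentalSolution_sq_eq_of_forall_eq hb fun t ht => h t ((uIcc_of_le hs.out.le).le ht).1
  rw [integrableOn_congr_fun heq measurableSet_Ioi, IntegrableOn,
    integrable_const_mul_iff
      (mul_pos (pow_pos (fundamentalSolution_pos b r) 2) (Real.exp_pos _)).ne'.isUnit,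
    ← IntegrableOn, integrableOn_Ioi_exp_mul_iff]
  constructor <;> intro <;> linarith

lemma integrableOn_Iic_fundamentalSolution_sq_iff (hb : Continuous b) {m r : ℝ}
    (h : ∀ t, t ≤ r → b t = m) :
    IntegrableOn (fun s => fundamentalSolution b s ^ 2) (Iic r) ↔ m < 0 := by
  have heq : EqOn (fun s => fundamentalSolution b s ^ 2)
      (fun s => (fundamentalSolution b r ^ 2 * Real.exp (2 * m * r)) * Real.exp (-(2 * m) * s))
      (Iic r) := fun s hs =>
    fundamentalSolution_sq_eq_of_forall_eq hb fun t ht => h t ((uIcc_of_ge hs.out).le ht).2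
  rw [integrableOn_congr_fun heq measurableSet_Iic, IntegrableOn,
    integrable_const_mul_iff
      (mul_pos (pow_pos (fundamentalSolution_pos b r) 2) (Real.exp_pos _)).ne'.isUnit,
    ← IntegrableOn, integrableOn_Iic_exp_mul_iff]
  constructor <;> intro <;> linarith

lemma memLp_two_fundamentalSolution_iff (hb : Continuous b) {p m l r : ℝ}
    (hright : ∀ t, r ≤ t → b t = p) (hleft : ∀ t, t ≤ l → b t = m) :
    MemLp (fundamentalSolution b) 2 ↔ 0 < p ∧ m < 0 := by
  have hcover : Iic l ∪ Icc l r ∪ Ioi r = univ := eq_univ_of_forall fun t => by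
    rcases le_or_gt t l with htl | hlt
    · exact .inl (.inl htl)
    rcases le_or_gt t r with htr | hrt
    · exact .inl (.inr ⟨hlt.le, htr⟩)
    · exact .inr hrt
  rw [memLp_two_iff_integrable_sq (continuous_fundamentalSolution hb).aestronglyMeasurable,
    ← integrableOn_univ, ← hcover, integrableOn_union, integrableOn_union,
    integrableOn_Iic_fundamentalSolution_sq_iff hb hleft,
    integrableOn_Ioi_fundamentalSolution_sq_iff hb hright]
  have hcompact : IntegrableOn (fun s => fundamentalSolution b s ^ 2) (Icc l r) :=
    ((continuous_fundamentalSolution hb).pow 2).integrableOn_Icc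
  tauto

end Scalar

section Diagonal

variable {n : ℕ} {a : ℝ → Fin n → ℝ} {ap am : Fin n → ℝ}

lemma mem_kerDiag_iff (ha : Continuous a) (hplus : ∀ s : ℝ, 1 ≤ s → ∀ i, a s i = ap i)
    (hminus : ∀ s : ℝ, s ≤ -1 → ∀ i, a s i = am i) {ξ : ℝ → Fin n → ℝ} :
    ξ ∈ kerDiag n a ↔ (∀ i, ξ 0 i ≠ 0 → 0 < ap i ∧ am i < 0) ∧
      ∀ s i, ξ s i = ξ 0 i * fundamentalSolution (a · i) s := by
  have hcoord : ∀ i, Continuous (a · i) := fun i => (continuous_apply i).comp ha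
  have hL2 : ∀ i, MemLp (fundamentalSolution (a · i)) 2 ↔ 0 < ap i ∧ am i < 0 := fun i =>
    memLp_two_fundamentalSolution_iff (hcoord i) (fun t ht => hplus t ht i)
      (fun t ht => hminus t ht i)
  constructor
  · rintro ⟨hξL2, hξ'⟩
    have hrepr : ∀ s i, ξ s i = ξ 0 i * fundamentalSolution (a · i) s := fun s i =>
      eq_mul_fundamentalSolution (hcoord i) (fun t => hasDerivAt_pi.1 (hξ' t) i) s
    refine ⟨fun i hi => (hL2 i).1 ?_, hrepr⟩
    have hξi : MemLp (fun s => ξ 0 i * fundamentalSolution (a · i) s) 2 := by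
      simpa only [← hrepr] using hξL2.eval i
    simpa [inv_mul_cancel_left₀ hi] using hξi.const_mul (ξ 0 i)⁻¹
  · rintro ⟨hsupp, hrepr⟩
    have hcomp : ∀ i, (ξ · i) = fun s => ξ 0 i * fundamentalSolution (a · i) s := fun i =>
      funext fun s => hrepr s i
    refine ⟨memLp_pi_iff.2 fun i => ?_, fun s => hasDerivAt_pi.2 fun i => ?_⟩
    · rw [hcomp i]
      by_cases hi : ξ 0 i = 0
      · simp [hi]
      · exact ((hL2 i).2 (hsupp i hi)).const_mul _
    · rw [hcomp i, hrepr s i]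
      refine ((hasDerivAt_fundamentalSolution (hcoord i) s).const_mul (ξ 0 i)).congr_deriv ?_
      ring

lemma finrank_kerDiag (ha : Continuous a) (hplus : ∀ s : ℝ, 1 ≤ s → ∀ i, a s i = ap i)
    (hminus : ∀ s : ℝ, s ≤ -1 → ∀ i, a s i = am i) :
    Module.finrank ℝ (kerDiag n a) = (univ.filter fun i => 0 < ap i ∧ am i < 0).card := by
  let E : kerDiag n a →ₗ[ℝ] ({i // 0 < ap i ∧ am i < 0} → ℝ) :=
    LinearMap.funLeft ℝ ℝ Subtype.val ∘ₗ LinearMap.proj 0 ∘ₗ (kerDiag n a).subtype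
  have hinj : Function.Injective E := by
    rintro ⟨ξ, hξ⟩ ⟨η, hη⟩ hE
    obtain ⟨hξsupp, hξrepr⟩ := (mem_kerDiag_iff ha hplus hminus).1 hξ
    obtain ⟨hηsupp, hηrepr⟩ := (mem_kerDiag_iff ha hplus hminus).1 hη
    have hinit : ξ 0 = η 0 := funext fun i => by
      by_cases hi : 0 < ap i ∧ am i < 0
      · exact congrFun hE ⟨i, hi⟩
      · rw [not_imp_comm.1 (hξsupp i) hi, not_imp_comm.1 (hηsupp i) hi]
    exact Subtype.ext (funext₂ fun s i => show ξ s i = η s i by rw [hξrepr, hηrepr, hinit])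
  have hsurj : Function.Surjective E := by
    intro c
    let v : Fin n → ℝ := fun i => if h : 0 < ap i ∧ am i < 0 then c ⟨i, h⟩ else 0
    have hξ : (fun s i => v i * fundamentalSolution (a · i) s) ∈ kerDiag n a := by
      refine (mem_kerDiag_iff ha hplus hminus).2 ⟨fun i hi => ?_, fun s i => by simp⟩
      by_contra h
      simp [v, h] at hi
    exact ⟨⟨_, hξ⟩, funext fun i => by simp [E, v, i.2]⟩
  rw [(LinearEquiv.ofBijective E ⟨hinj, hsurj⟩).finrank_eq, Module.finrank_fintype_fun_eq_card,
    Fintype.card_subtype]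

end Diagonal

lemma Finset.card_sdiff_of_isLowerSet {ι : Type*} [LinearOrder ι] {s t : Finset ι}
    (hs : IsLowerSet (s : Set ι)) (ht : IsLowerSet (t : Set ι)) : #(s \ t) = #s - #t := by
  rcases hs.total ht with hst | hts
  · rw [sdiff_eq_empty_iff_subset.2 (coe_subset.1 hst), card_empty,
      Nat.sub_eq_zero_of_le (card_le_card (coe_subset.1 hst))]
  · exact card_sdiff_of_subset (coe_subset.1 hts)

theorem kernel_dimension_diagonal_general
    (n : ℕ) (a : ℝ → Fin n → ℝ) (ha : Continuous a)
    (ap am : Fin n → ℝ)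
    (hplus : ∀ s : ℝ, 1 ≤ s → ∀ i, a s i = ap i)
    (hminus : ∀ s : ℝ, s ≤ -1 → ∀ i, a s i = am i)
    (hapne : ∀ i, ap i ≠ 0)
    (hapmono : Monotone ap) (hammono : Monotone am) :
    Module.finrank ℝ (kerDiag n a) =
      (Finset.univ.filter fun i => am i < 0).card -
        (Finset.univ.filter fun i => ap i < 0).card := by
  have hlower : ∀ f : Fin n → ℝ, Monotone f →
      IsLowerSet (↑(univ.filter fun i => f i < 0) : Set (Fin n)) := fun f hf => by
    simpa [Set.preimage] using (isLowerSet_Iio (0 : ℝ)).preimage hf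
  have hsplit : univ.filter (fun i => 0 < ap i ∧ am i < 0) =
      univ.filter (fun i => am i < 0) \ univ.filter (fun i => ap i < 0) := by
    ext i
    simp only [Finset.mem_filter, Finset.mem_univ, true_and, Finset.mem_sdiff, not_lt,
      (hapne i).symm.le_iff_lt, and_comm]
  rw [finrank_kerDiag ha hplus hminus, hsplit,
    card_sdiff_of_isLowerSet (hlower am hammono) (hlower ap hapmono)]

/-- If `A(s) = diag(a₁(s), …, a_n(s))` is continuous, constant equal to
nonzero values `aᵢ^±` for `±s ≥ 1`, with the asymptotic eigenvalues ordered
increasingly, then `dim ker D_A = max{μ(A⁻) - μ(A⁺), 0}` where `μ(A^±)` is the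
number of negative entries among the `aᵢ^±` (`ℕ`-subtraction is truncated). -/
theorem kernel_dimension_diagonal
    (n : ℕ) (a : ℝ → Fin n → ℝ) (ha : Continuous a)
    (ap am : Fin n → ℝ)
    (hplus : ∀ s : ℝ, 1 ≤ s → ∀ i, a s i = ap i)
    (hminus : ∀ s : ℝ, s ≤ -1 → ∀ i, a s i = am i)
    (hapne : ∀ i, ap i ≠ 0) (hamne : ∀ i, am i ≠ 0)
    (hapmono : Monotone ap) (hammono : Monotone am) :
    Module.finrank ℝ (kerDiag n a) =
      (Finset.univ.filter fun i => am i < 0).card -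
        (Finset.univ.filter fun i => ap i < 0).card :=
  kernel_dimension_diagonal_general n a ha ap am hplus hminus hapne hapmono hammono
end

section
/- Let X be a set with a convergence structure C ⊆ X × X^ℕ (satisfying the Constant, Subsequence, Subsubsequence, Diagonal, and Uniqueness axioms). Define U ⊆ X to be open iff for every (x₀,(x_n)) ∈ C with x₀ ∈ U there exists n₀ with x_n ∈ U for all n ≥ n₀. Then the collection of open sets forms a topology on X, and a sequence (x_n) converges to x₀ in this topology if and only if (x₀,(x_n)) ∈ C. -/
open Filter

/-- A convergence structure on a set `X`: a set of pairs (limit, sequence)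
satisfying the Constant, Subsequence, Subsubsequence, Diagonal and Uniqueness
axioms. -/
structure ConvergenceStructure (X : Type*) where
  C : Set (X × (ℕ → X))
  const : ∀ x : X, (x, fun _ => x) ∈ C
  subseq : ∀ (x : X) (u : ℕ → X) (g : ℕ → ℕ), StrictMono g →
    (x, u) ∈ C → (x, u ∘ g) ∈ C
  subsubseq : ∀ (x : X) (u : ℕ → X),
    (∀ g : ℕ → ℕ, StrictMono g →
      ∃ f : ℕ → ℕ, StrictMono f ∧ (x, u ∘ g ∘ f) ∈ C) → (x, u) ∈ C
  diagonal : ∀ (x : X) (u : ℕ → X) (v : ℕ → ℕ → X),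
    (x, u) ∈ C → (∀ k, (u k, v k) ∈ C) →
    ∃ k' n' : ℕ → ℕ, (x, fun i => v (k' i) (n' i)) ∈ C
  uniq : ∀ (x y : X) (u : ℕ → X), (x, u) ∈ C → (y, u) ∈ C → x = y

/-- If every fiber of `σ : ℕ → ℕ` is finite, we can extract a strictly monotone
`f` such that `σ ∘ f` is strictly monotone. -/
lemma exists_strictMono_comp (σ : ℕ → ℕ) (h : ∀ m, {i | σ i = m}.Finite) :
    ∃ f : ℕ → ℕ, StrictMono f ∧ StrictMono (σ ∘ f) := by
  have htend : Tendsto σ atTop atTop := by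
    rw [tendsto_atTop_atTop]
    intro b
    have hfin : {i | σ i < b}.Finite := by
      have hsub : {i | σ i < b} ⊆ ⋃ m ∈ Finset.range b, {i | σ i = m} := by
        intro i hi
        simp only [Set.mem_iUnion, Finset.mem_range, Set.mem_setOf_eq]
        exact ⟨σ i, hi, rfl⟩
      exact (Set.Finite.biUnion (Finset.range b).finite_toSet (fun m _ => h m)).subset hsub
    obtain ⟨N, hN⟩ := hfin.bddAbove
    refine ⟨N + 1, fun n hn => ?_⟩
    by_contra hb
    exact absurd (hN (by simpa using Nat.lt_of_not_le hb)) (by omega)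
  have key : ∀ n : ℕ, ∃ i, n < i ∧ σ n < σ i := by
    intro n
    obtain ⟨N, hN⟩ := eventually_atTop.mp (htend.eventually (eventually_gt_atTop (σ n)))
    exact ⟨max (n + 1) N, by omega, hN _ (le_max_right _ _)⟩
  choose nxt h1 h2 using key
  let f : ℕ → ℕ := fun n => Nat.rec 0 (fun _ ih => nxt ih) n
  have hstep : ∀ n, f (n + 1) = nxt (f n) := fun n => rfl
  refine ⟨f, strictMono_nat_of_lt_succ fun n => ?_, strictMono_nat_of_lt_succ fun n => ?_⟩
  · rw [hstep]; exact h1 (f n)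
  · show σ (f n) < σ (f (n + 1)); rw [hstep]; exact h2 (f n)

/-- The open sets associated to a convergence structure (`U` is open iff every
sequence converging to a point of `U` is eventually in `U`) form a topology on
`X`, and a sequence converges in this topology to `x₀` if and only if it
converges to `x₀` in the convergence structure. -/
theorem convergence_structure_topology
    {X : Type*} (S : ConvergenceStructure X) :
    ∃ t : TopologicalSpace X,
      (∀ U : Set X, t.IsOpen U ↔
        ∀ p ∈ S.C, p.1 ∈ U → ∃ n₀ : ℕ, ∀ n ≥ n₀, p.2 n ∈ U) ∧
      ∀ (x₀ : X) (u : ℕ → X),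
        (x₀, u) ∈ S.C ↔ Tendsto u atTop (@nhds X t x₀) := by
  classical
  letI t : TopologicalSpace X :=
    { IsOpen := fun U => ∀ p ∈ S.C, p.1 ∈ U → ∃ n₀ : ℕ, ∀ n ≥ n₀, p.2 n ∈ U
      isOpen_univ := fun _ _ _ => ⟨0, fun _ _ => trivial⟩
      isOpen_inter := by
        rintro U V hU hV p hp ⟨h1, h2⟩
        obtain ⟨a, ha⟩ := hU p hp h1
        obtain ⟨b, hb⟩ := hV p hp h2
        exact ⟨max a b, fun n hn =>
          ⟨ha n (le_trans (le_max_left _ _) hn), hb n (le_trans (le_max_right _ _) hn)⟩⟩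
      isOpen_sUnion := by
        intro s hs p hp hx
        obtain ⟨U, hUs, hxU⟩ := hx
        obtain ⟨a, ha⟩ := hs U hUs p hp hxU
        exact ⟨a, fun n hn => ⟨U, hUs, ha n hn⟩⟩ }
  refine ⟨t, fun U => Iff.rfl, fun x₀ u => ⟨?_, ?_⟩⟩
  · -- forward direction
    intro hu
    rw [tendsto_nhds]
    intro U hU hxU
    obtain ⟨n₀, hn₀⟩ := hU (x₀, u) hu hxU
    exact eventually_atTop.mpr ⟨n₀, hn₀⟩
  · -- backward direction
    intro htend
    apply S.subsubseq
    intro g hg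
    by_contra hcon
    push_neg at hcon
    have hw : Tendsto (u ∘ g) atTop (nhds x₀) := htend.comp hg.tendsto_atTop
    by_cases hfreq : ∃ᶠ n in atTop, u (g n) = x₀
    · obtain ⟨φ, hφ, hφ'⟩ := extraction_of_frequently_atTop hfreq
      refine hcon φ hφ ?_
      have he : u ∘ g ∘ φ = fun _ => x₀ := funext fun n => hφ' n
      rw [he]; exact S.const x₀
    · rw [not_frequently] at hfreq
      obtain ⟨N, hN⟩ := eventually_atTop.mp hfreq
      set v : ℕ → X := fun n => u (g (N + n)) with hv_def
      have hf₀ : StrictMono fun n : ℕ => N + n := fun a b h => by simpa using Nat.add_lt_add_left h N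
      have hv_ne : ∀ n, v n ≠ x₀ := fun n => hN _ (Nat.le_add_right N n)
      have hv_tend : Tendsto v atTop (nhds x₀) := hw.comp hf₀.tendsto_atTop
      have hv_sub : ∀ f : ℕ → ℕ, StrictMono f → (x₀, v ∘ f) ∉ S.C := by
        intro f hf hC
        exact hcon (fun n => N + f n) (fun a b h => by simpa using Nat.add_lt_add_left (hf h) N) hC
      have hx₀A : ¬∃ σ : ℕ → ℕ, (x₀, v ∘ σ) ∈ S.C := by
        rintro ⟨σ, hσ⟩
        by_cases hb : ∀ m, {i | σ i = m}.Finite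
        · obtain ⟨f, hf, hsf⟩ := exists_strictMono_comp σ hb
          exact hv_sub (σ ∘ f) hsf (S.subseq _ _ f hf hσ)
        · push_neg at hb
          obtain ⟨m, hm⟩ := hb
          have hfr : ∃ᶠ i in atTop, σ i = m :=
            Nat.frequently_atTop_iff_infinite.mpr hm
          obtain ⟨f, hf, hf'⟩ := extraction_of_frequently_atTop hfr
          have h1 : (x₀, (v ∘ σ) ∘ f) ∈ S.C := S.subseq _ _ f hf hσ
          have h2 : (v ∘ σ) ∘ f = fun _ => v m := funext fun i => by
            simp [Function.comp, hf' i]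
          rw [h2] at h1
          exact hv_ne m (S.uniq x₀ (v m) _ h1 (S.const (v m))).symm
      set A : Set X := {y | ∃ σ : ℕ → ℕ, (y, v ∘ σ) ∈ S.C} with hA_def
      have hUopen : IsOpen Aᶜ := by
        show ∀ p ∈ S.C, p.1 ∈ Aᶜ → ∃ n₀ : ℕ, ∀ n ≥ n₀, p.2 n ∈ Aᶜ
        intro p hp hpU
        by_contra hno
        push_neg at hno
        have hfr : ∃ᶠ n in atTop, p.2 n ∈ A := by
          rw [frequently_atTop]
          intro a
          obtain ⟨n, hn, hn'⟩ := hno a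
          exact ⟨n, hn, Set.not_notMem.mp hn'⟩
        obtain ⟨h, hh, hhA⟩ := extraction_of_frequently_atTop hfr
        choose σ hσ using hhA
        have h1 : (p.1, p.2 ∘ h) ∈ S.C := S.subseq _ _ h hh hp
        obtain ⟨k', n', hd⟩ := S.diagonal p.1 (p.2 ∘ h) (fun k => v ∘ σ k) h1 hσ
        exact hpU ⟨fun i => σ (k' i) (n' i), hd⟩
      have hx₀U : x₀ ∈ Aᶜ := hx₀A
      have hmem : Aᶜ ∈ nhds x₀ := hUopen.mem_nhds hx₀U
      obtain ⟨n₀, hn₀⟩ := eventually_atTop.mp (hv_tend.eventually (eventually_mem_set.mpr hmem))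
      exact hn₀ n₀ le_rfl ⟨fun _ => n₀, S.const (v n₀)⟩
end
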